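/- Let S be a unary semigroup satisfying the identities xx'x ≈ x, x'' ≈ x, (x'x)' ≈ x'x, and (xy)' ≈ y'(x'xyy')'x'. If the semigroup reduct of S is isomorphic to a Rees matrix semigroup M⁰[P] over the trivial group whose sandwich matrix P has a nonzero entry in every row and every column (i.e., S is a completely 0-simple semigroup with trivial subgroups), then S is isomorphic, as a unary semigroup, to the adjacency semigroup A(H) of some reflexive graph H. -/
import Mathlib


/-- Multiplication of the adjacency semigroup `A(G)` of a graph `G = ⟨V; r⟩`:
the carrier is `Option (V × V)` with `none` playing the role of the zero element. -/
noncomputable def adjMul {V : Type*} (r : V → V → Prop) :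
    Option (V × V) → Option (V × V) → Option (V × V)
  | some (x, y), some (z, t) =>
      @ite _ (r y z) (Classical.propDecidable _) (some (x, t)) none
  | _, _ => none

/-- Reversion in the adjacency semigroup: `(x,y)' = (y,x)` and `0' = 0`. -/
def adjStar {V : Type*} : Option (V × V) → Option (V × V)
  | some (x, y) => some (y, x)
  | none => none

/-- Multiplication of the Rees matrix semigroup `M⁰[P]` over the trivial group,
with sandwich matrix `P` (entry `P j i` nonzero iff the proposition holds);
the carrier is `Option (I × J)` with `none` the zero element. -/
noncomputable def reesMul {I J : Type*} (P : J → I → Prop) :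
    Option (I × J) → Option (I × J) → Option (I × J)
  | some (i₁, j₁), some (i₂, j₂) =>
      @ite _ (P j₁ i₂) (Classical.propDecidable _) (some (i₁, j₂)) none
  | _, _ => none

lemma reesMul_none_left {I J : Type*} (P : J → I → Prop) (x : Option (I × J)) :
    reesMul P none x = none := rfl

lemma reesMul_none_right {I J : Type*} (P : J → I → Prop) (x : Option (I × J)) :
    reesMul P x none = none := by
  cases x with
  | none => rfl
  | some p => obtain ⟨i, j⟩ := p; rfl

lemma adjMul_none_left {V : Type*} (r : V → V → Prop) (x : Option (V × V)) :
    adjMul r none x = none := rfl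

lemma adjMul_none_right {V : Type*} (r : V → V → Prop) (x : Option (V × V)) :
    adjMul r x none = none := by
  cases x with
  | none => rfl
  | some p => obtain ⟨i, j⟩ := p; rfl

/-- Lemma: a unary semigroup satisfying `xx'x ≈ x`, `x'' ≈ x`, `(x'x)' ≈ x'x`
and `(xy)' ≈ y'(x'xyy')'x'` whose semigroup reduct is a completely 0-simple
semigroup with trivial subgroups (i.e. a Rees matrix semigroup over the trivial
group whose sandwich matrix has a nonzero entry in every row and column) is
isomorphic, as a unary semigroup, to the adjacency semigroup of a reflexive graph. -/
theorem czs_model_is_adjacency_of_reflexive {S : Type u} [Semigroup S] [Star S]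
    (h1 : ∀ x : S, x * star x * x = x)
    (h2 : ∀ x : S, star (star x) = x)
    (h3 : ∀ x : S, star (star x * x) = star x * x)
    (h4 : ∀ x y : S, star (x * y) = star y * star (star x * x * y * star y) * star x)
    {I J : Type u} [Nonempty I] [Nonempty J] (P : J → I → Prop)
    (hrow : ∀ j : J, ∃ i : I, P j i) (hcol : ∀ i : I, ∃ j : J, P j i)
    (f : S ≃ Option (I × J)) (hf : ∀ a b : S, f (a * b) = reesMul P (f a) (f b)) :
    ∃ (V : Type u) (rel : V → V → Prop), (∀ v : V, rel v v) ∧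
      ∃ e : S ≃ Option (V × V),
        (∀ a b : S, e (a * b) = adjMul rel (e a) (e b)) ∧
        (∀ a : S, e (star a) = adjStar (e a)) := by
  classical
  -- the zero element
  set z : S := f.symm none with hzdef
  have fz : f z = none := f.apply_symm_apply none
  have zmul : ∀ a : S, a * z = z := by
    intro a
    apply f.injective
    rw [hf, fz, reesMul_none_right]
  have mulz : ∀ a : S, z * a = z := by
    intro a
    apply f.injective
    rw [hf, fz, reesMul_none_left]
  have starz : star z = z := by
    have h := h1 (star z)
    rw [h2] at h
    rw [zmul (star z), mulz (star z)] at h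
    exact h.symm
  -- star of a nonzero element is nonzero; define the coordinate map `st`
  have key : ∀ p : I × J, ∃ q : I × J, f (star (f.symm (some p))) = some q := by
    intro p
    cases hq : f (star (f.symm (some p))) with
    | some q => exact ⟨q, rfl⟩
    | none =>
      exfalso
      have hz1 : star (f.symm (some p)) = z := f.injective (by rw [hq, fz])
      have hz2 : f.symm (some p) = z := by
        rw [← h2 (f.symm (some p)), hz1, starz]
      have := congrArg f hz2
      rw [f.apply_symm_apply, fz] at this
      exact Option.some_ne_none p this
  choose st hst using key
  have hst' : ∀ {x : S} {p : I × J}, f x = some p → f (star x) = some (st p) := by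
    intro x p hx
    have hx' : x = f.symm (some p) := by rw [← hx, f.symm_apply_apply]
    rw [hx']
    exact hst p
  -- st is an involution
  have stst : ∀ p : I × J, st (st p) = p := by
    intro p
    have h := hst' (hst p)
    rw [h2, f.apply_symm_apply] at h
    exact (Option.some_injective _ h).symm
  -- sandwich matrix entries coming from x x' x = x
  have hent : ∀ (i : I) (j : J), P j (st (i, j)).1 ∧ P (st (i, j)).2 i := by
    intro i j
    obtain ⟨σ, τ, hq⟩ : ∃ σ τ, st (i, j) = (σ, τ) := ⟨_, _, rfl⟩
    rw [hq]
    set x := f.symm (some (i, j)) with hxdef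
    have hx : f x = some (i, j) := f.apply_symm_apply _
    have hsx : f (star x) = some (σ, τ) := by rw [hst' hx, hq]
    have h := congrArg f (h1 x)
    rw [hf, hf, hx, hsx] at h
    by_cases hA : P j σ
    · refine ⟨hA, ?_⟩
      by_cases hB : P τ i
      · exact hB
      · exfalso; simp [reesMul, hA, hB] at h
    · exfalso; simp [reesMul, hA] at h
  -- auxiliary unary-semigroup identities
  have aux1 : ∀ x : S, star x * x * star x = star x := by
    intro x
    have h := h1 (star x)
    rwa [h2] at h
  have aux2 : ∀ x : S, star (x * star x) = x * star x := by
    intro x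
    have h := h4 x (star x)
    simp only [h2] at h
    rw [aux1 x, h3 x, ← mul_assoc x (star x) x, h1 x] at h
    exact h
  -- uniqueness of star-fixed idempotents in a common column / row
  have uniq : ∀ e g : S, star e = e → star g = g → e * g = e → g * e = g →
      e * e = e → g * g = g → e = g := by
    intro e g he hg heg hge hee hgg
    have h := h4 e g
    rw [he, hg] at h
    rw [hee, heg, heg, he, hge, hge] at h
    exact h
  have uniq2 : ∀ p q : S, star p = p → star q = q → q * p = p → p * q = q →
      p * p = p → q * q = q → p = q := by
    intro p q hp hq hqp hpq hpp hqq
    have h := h4 q p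
    rw [hq, hp] at h
    rw [hqq, hqp, hpp, hp, hpp, hpq] at h
    exact h
  -- star-fixed elements obtained from x'x and xx'
  have fix1 : ∀ (i : I) (j : J), st ((st (i, j)).1, j) = ((st (i, j)).1, j) := by
    intro i j
    obtain ⟨σ, τ, hq⟩ : ∃ σ τ, st (i, j) = (σ, τ) := ⟨_, _, rfl⟩
    rw [hq]
    have hPτ : P τ i := by have := (hent i j).2; rwa [hq] at this
    set x := f.symm (some (i, j)) with hxdef
    have hx : f x = some (i, j) := f.apply_symm_apply _
    have hsx : f (star x) = some (σ, τ) := by rw [hst' hx, hq]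
    have hy : f (star x * x) = some (σ, j) := by
      rw [hf, hsx, hx]; simp [reesMul, hPτ]
    have h := hst' hy
    rw [h3 x, hy] at h
    exact (Option.some_injective _ h).symm
  have fix2 : ∀ (i : I) (j : J), st (i, (st (i, j)).2) = (i, (st (i, j)).2) := by
    intro i j
    obtain ⟨σ, τ, hq⟩ : ∃ σ τ, st (i, j) = (σ, τ) := ⟨_, _, rfl⟩
    rw [hq]
    have hPσ : P j σ := by have := (hent i j).1; rwa [hq] at this
    set x := f.symm (some (i, j)) with hxdef
    have hx : f x = some (i, j) := f.apply_symm_apply _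
    have hsx : f (star x) = some (σ, τ) := by rw [hst' hx, hq]
    have hy : f (x * star x) = some (i, τ) := by
      rw [hf, hsx, hx]; simp [reesMul, hPσ]
    have h := hst' hy
    rw [aux2 x, hy] at h
    exact (Option.some_injective _ h).symm
  -- star-fixedness transfers to actual elements of S
  have fixedS : ∀ p : I × J, st p = p → star (f.symm (some p)) = f.symm (some p) := by
    intro p hp
    apply f.injective
    rw [hst' (f.apply_symm_apply (some p)), hp, f.apply_symm_apply]
  -- first coordinate of st depends only on the column
  have sdep : ∀ (i k : I) (j : J), (st (i, j)).1 = (st (k, j)).1 := by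
    intro i k j
    set σ₁ := (st (i, j)).1
    set σ₂ := (st (k, j)).1
    have hP1 : P j σ₁ := (hent i j).1
    have hP2 : P j σ₂ := (hent k j).1
    set e := f.symm (some (σ₁, j)) with hedef
    set g := f.symm (some (σ₂, j)) with hgdef
    have hfe : f e = some (σ₁, j) := f.apply_symm_apply _
    have hfg : f g = some (σ₂, j) := f.apply_symm_apply _
    have he : star e = e := fixedS _ (fix1 i j)
    have hg : star g = g := fixedS _ (fix1 k j)
    have heg : e * g = e := f.injective (by simp only [hf, hfe, hfg]; simp [reesMul, hP2])
    have hge : g * e = g := f.injective (by simp only [hf, hfe, hfg]; simp [reesMul, hP1])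
    have hee : e * e = e := f.injective (by simp only [hf, hfe]; simp [reesMul, hP1])
    have hgg : g * g = g := f.injective (by simp only [hf, hfg]; simp [reesMul, hP2])
    have h := uniq e g he hg heg hge hee hgg
    have heqg := congrArg f h
    rw [hfe, hfg] at heqg
    have hpair : (σ₁, j) = (σ₂, j) := Option.some_injective _ heqg
    exact (Prod.ext_iff.mp hpair).1
  -- second coordinate of st depends only on the row
  have tdep : ∀ (i : I) (j l : J), (st (i, j)).2 = (st (i, l)).2 := by
    intro i j l
    set τ₁ := (st (i, j)).2
    set τ₂ := (st (i, l)).2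
    have hP1 : P τ₁ i := (hent i j).2
    have hP2 : P τ₂ i := (hent i l).2
    set p := f.symm (some (i, τ₁)) with hpdef
    set q := f.symm (some (i, τ₂)) with hqdef
    have hfp : f p = some (i, τ₁) := f.apply_symm_apply _
    have hfq : f q = some (i, τ₂) := f.apply_symm_apply _
    have hp : star p = p := fixedS _ (fix2 i j)
    have hq : star q = q := fixedS _ (fix2 i l)
    have hqp : q * p = p := f.injective (by simp only [hf, hfq, hfp]; simp [reesMul, hP2])
    have hpq : p * q = q := f.injective (by simp only [hf, hfp, hfq]; simp [reesMul, hP1])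
    have hpp : p * p = p := f.injective (by simp only [hf, hfp]; simp [reesMul, hP1])
    have hqq : q * q = q := f.injective (by simp only [hf, hfq]; simp [reesMul, hP2])
    have h := uniq2 p q hp hq hqp hpq hpp hqq
    have hpeq := congrArg f h
    rw [hfp, hfq] at hpeq
    have hpair : ((i, τ₁) : I × J) = (i, τ₂) := Option.some_injective _ hpeq
    exact (Prod.ext_iff.mp hpair).2
  -- the bijections s : J → I and t : I → J
  set i₀ : I := Classical.arbitrary I
  set j₀ : J := Classical.arbitrary J
  set s : J → I := fun j => (st (i₀, j)).1 with hsdef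
  set t : I → J := fun i => (st (i, j₀)).2 with htdef
  have stform : ∀ (i : I) (j : J), st (i, j) = (s j, t i) := by
    intro i j
    have hA : (st (i, j)).1 = s j := sdep i i₀ j
    have hB : (st (i, j)).2 = t i := tdep i j j₀
    exact Prod.ext hA hB
  have ts : ∀ j : J, t (s j) = j := by
    intro j
    have h := stst (i₀, j)
    rw [stform i₀ j, stform (s j) (t i₀)] at h
    exact congrArg Prod.snd h
  have st' : ∀ i : I, s (t i) = i := by
    intro i
    have h := stst (i, j₀)
    rw [stform i j₀, stform (s j₀) (t i)] at h
    exact congrArg Prod.fst h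
  have Pdiag : ∀ i : I, P (t i) i := by
    intro i
    have := (hent i j₀).2
    rwa [stform i j₀] at this
  -- assemble the reflexive graph and the isomorphism
  refine ⟨I, fun a b => P (t a) b, Pdiag,
    ⟨⟨fun x => (f x).map (fun p => (p.1, s p.2)),
      fun y => f.symm (y.map (fun p => (p.1, t p.2))), ?_, ?_⟩, ?_, ?_⟩⟩
  · -- left inverse
    intro x
    show f.symm (((f x).map _).map _) = x
    rw [Option.map_map]
    have hcomp : ((fun p : I × I => (p.1, t p.2)) ∘ (fun p : I × J => (p.1, s p.2)))
        = id := by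
      funext p; simp [ts]
    simp [hcomp]
  · -- right inverse
    intro y
    show (f (f.symm (y.map _))).map _ = y
    rw [f.apply_symm_apply, Option.map_map]
    have hcomp : ((fun p : I × J => (p.1, s p.2)) ∘ (fun p : I × I => (p.1, t p.2)))
        = id := by
      funext p; simp [st']
    simp [hcomp]
  · -- multiplicativity
    intro a b
    show (f (a * b)).map _ = adjMul _ ((f a).map _) ((f b).map _)
    rw [hf]
    cases ha : f a with
    | none => rw [reesMul_none_left]; simp [adjMul_none_left]
    | some p =>
      obtain ⟨i₁, j₁⟩ := p
      cases hb : f b with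
      | none => rw [reesMul_none_right]; simp [adjMul_none_right]
      | some q =>
        obtain ⟨i₂, j₂⟩ := q
        by_cases hP : P j₁ i₂
        · simp [reesMul, adjMul, ts, hP]
        · simp [reesMul, adjMul, ts, hP]
  · -- star
    intro a
    show (f (star a)).map _ = adjStar ((f a).map _)
    cases ha : f a with
    | none =>
      have haz : a = z := by rw [hzdef, ← ha, f.symm_apply_apply]
      rw [haz, starz, fz]
      rfl
    | some p =>
      obtain ⟨i, j⟩ := p
      rw [hst' ha, stform i j]
      simp [adjStar, st']
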